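/- Let V be a real Hilbert space, (X, μ) a measure space, and γ : V → L²(μ; ℝ) a bounded linear map with ‖γv‖_{L²(μ)} ≤ c_V ‖v‖_V for all v ∈ V (some c_V > 0). Let r : X × ℝ → ℝ satisfy r(x,s) ≥ 0, x ↦ r(x,s) measurable for each s, r(·,0) ∈ L²(μ), and |r(x,s₁) − r(x,s₂)| ≤ L_r|s₁ − s₂| for all x, s₁, s₂ (some L_r > 0). For η, v ∈ V define j(η, v) = ∫_X r(x, |(γη)(x)|) |(γv)(x)| dμ(x). Then for all η₁, η₂, v₁, v₂ ∈ V: j(η₁, v₂) − j(η₁, v₁) + j(η₂, v₁) − j(η₂, v₂) ≤ c_V² L_r ‖η₁ − η₂‖_V ‖v₁ − v₂‖_V. -/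

import Mathlib

open MeasureTheory

/-!
Pointwise, the four-term sum is the integral of
`(r(x, |γη₁ x|) - r(x, |γη₂ x|)) * (|γv₂ x| - |γv₁ x|)`, which the Lipschitz bound on `r` and the
reverse triangle inequality dominate by `L_r * |γ(η₁ - η₂) x| * |γ(v₁ - v₂) x|`. Cauchy–Schwarz in
`L²(μ)` and the trace bound `‖γ v‖ ≤ c_V ‖v‖` then give the estimate. The integrals are not
junk: `r` is a Carathéodory function with linear growth, so `x ↦ r(x, t x)` lies in `L²(μ)`
whenever `t` does.
-/

theorem sub_mul_abs_sub_abs_le {φ : ℝ → ℝ} {L : ℝ} (hL : 0 ≤ L)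
    (hφ : ∀ s₁ s₂, |φ s₁ - φ s₂| ≤ L * |s₁ - s₂|) (a b c d : ℝ) :
    (φ (|a|) - φ (|b|)) * (|d| - |c|) ≤ L * (|a - b| * |c - d|) := by
  have hφab : |φ (|a|) - φ (|b|)| ≤ L * |a - b| :=
    (hφ _ _).trans (mul_le_mul_of_nonneg_left (abs_abs_sub_abs_le_abs_sub a b) hL)
  have hdc : |(|d| - |c|)| ≤ |c - d| :=
    (abs_abs_sub_abs_le_abs_sub d c).trans_eq (abs_sub_comm d c)
  calc (φ (|a|) - φ (|b|)) * (|d| - |c|) ≤ |φ (|a|) - φ (|b|)| * |(|d| - |c|)| :=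
        (le_abs_self _).trans_eq (abs_mul _ _)
    _ ≤ L * |a - b| * |c - d| :=
        mul_le_mul hφab hdc (abs_nonneg _) ((abs_nonneg _).trans hφab)
    _ = L * (|a - b| * |c - d|) := mul_assoc _ _ _

namespace MeasureTheory

variable {X : Type*} [MeasurableSpace X] {μ : Measure X}

theorem aemeasurable_comp_of_measurable_of_continuous {r : X × ℝ → ℝ}
    (hmeas : ∀ s, Measurable fun x => r (x, s)) (hcont : ∀ x, Continuous fun s => r (x, s))
    {t : X → ℝ} (ht : AEMeasurable t μ) : AEMeasurable (fun x => r (x, t x)) μ :=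
  (measurable_uncurry_of_continuous_of_measurable (u := fun s x => r (x, s)) hcont
    hmeas).comp_aemeasurable (ht.prodMk aemeasurable_id)

theorem MemLp.comp_of_abs_sub_le {p : ENNReal} {r : X × ℝ → ℝ} {L : ℝ}
    (hmeas : ∀ s, Measurable fun x => r (x, s)) (hr0 : MemLp (fun x => r (x, 0)) p μ)
    (hlip : ∀ x s₁ s₂, |r (x, s₁) - r (x, s₂)| ≤ L * |s₁ - s₂|)
    {t : X → ℝ} (ht : MemLp t p μ) : MemLp (fun x => r (x, t x)) p μ := by
  have hcont : ∀ x, Continuous fun s => r (x, s) := fun x =>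
    (LipschitzWith.of_dist_le' fun s₁ s₂ => by
      simpa only [Real.dist_eq] using hlip x s₁ s₂).continuous
  have hmeas' : AEStronglyMeasurable (fun x => r (x, t x) - r (x, 0)) μ :=
    ((aemeasurable_comp_of_measurable_of_continuous hmeas hcont
      ht.aestronglyMeasurable.aemeasurable).sub (hmeas 0).aemeasurable).aestronglyMeasurable
  have hdiff : MemLp (fun x => r (x, t x) - r (x, 0)) p μ := by
    refine (ht.const_mul L).of_le hmeas' (Filter.Eventually.of_forall fun x => ?_)
    calc ‖r (x, t x) - r (x, 0)‖ ≤ L * |t x - 0| := hlip x _ _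
      _ ≤ ‖L * t x‖ := by
        rw [sub_zero, Real.norm_eq_abs, abs_mul]
        exact mul_le_mul_of_nonneg_right (le_abs_self L) (abs_nonneg _)
  convert hdiff.add hr0 using 1
  funext x
  exact (sub_add_cancel _ _).symm

theorem integral_four_term_eq {f₁ f₂ g₁ g₂ : X → ℝ} (hf₁ : MemLp f₁ 2 μ) (hf₂ : MemLp f₂ 2 μ)
    (hg₁ : MemLp g₁ 2 μ) (hg₂ : MemLp g₂ 2 μ) :
    (∫ x, f₁ x * g₂ x ∂μ) - (∫ x, f₁ x * g₁ x ∂μ) + (∫ x, f₂ x * g₁ x ∂μ)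
        - (∫ x, f₂ x * g₂ x ∂μ) = ∫ x, (f₁ x - f₂ x) * (g₂ x - g₁ x) ∂μ := by
  have hint {f g : X → ℝ} (hf : MemLp f 2 μ) (hg : MemLp g 2 μ) :
      Integrable (fun x => f x * g x) μ :=
    hf.integrable_mul hg
  calc _ = ∫ x, (f₁ x * g₂ x - f₁ x * g₁ x) + (f₂ x * g₁ x - f₂ x * g₂ x) ∂μ := by
        rw [integral_add (f := fun x => f₁ x * g₂ x - f₁ x * g₁ x)
            (g := fun x => f₂ x * g₁ x - f₂ x * g₂ x)
            ((hint hf₁ hg₂).sub (hint hf₁ hg₁)) ((hint hf₂ hg₁).sub (hint hf₂ hg₂)),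
          integral_sub (hint hf₁ hg₂) (hint hf₁ hg₁), integral_sub (hint hf₂ hg₁) (hint hf₂ hg₂)]
        ring
    _ = ∫ x, (f₁ x - f₂ x) * (g₂ x - g₁ x) ∂μ := integral_congr_ae (.of_forall fun x => by ring)

theorem L2.integral_abs_mul_abs_le (f g : Lp ℝ 2 μ) : ∫ x, |f x| * |g x| ∂μ ≤ ‖f‖ * ‖g‖ := by
  have hinner : ∫ x, |f x| * |g x| ∂μ = inner ℝ (|f|) (|g|) := by
    rw [L2.inner_def]
    refine integral_congr_ae ?_
    filter_upwards [Lp.coeFn_abs f, Lp.coeFn_abs g] with x hf hg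
    simp [hf, hg, mul_comm]
  calc ∫ x, |f x| * |g x| ∂μ = inner ℝ (|f|) (|g|) := hinner
    _ ≤ ‖|f|‖ * ‖|g|‖ := real_inner_le_norm _ _
    _ = ‖f‖ * ‖g‖ := by rw [norm_abs_eq_norm, norm_abs_eq_norm]

theorem Lp.four_term_le_of_abs_sub_le {r : X × ℝ → ℝ} {L : ℝ}
    (hmeas : ∀ s, Measurable fun x => r (x, s)) (hr0 : MemLp (fun x => r (x, 0)) 2 μ)
    (hL : 0 ≤ L) (hlip : ∀ x s₁ s₂, |r (x, s₁) - r (x, s₂)| ≤ L * |s₁ - s₂|)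
    (t₁ t₂ u₁ u₂ : Lp ℝ 2 μ) :
    (∫ x, r (x, |t₁ x|) * |u₂ x| ∂μ) - (∫ x, r (x, |t₁ x|) * |u₁ x| ∂μ)
        + (∫ x, r (x, |t₂ x|) * |u₁ x| ∂μ) - (∫ x, r (x, |t₂ x|) * |u₂ x| ∂μ)
      ≤ L * ‖t₁ - t₂‖ * ‖u₁ - u₂‖ := by
  have hF (t : Lp ℝ 2 μ) : MemLp (fun x => r (x, |t x|)) 2 μ :=
    MemLp.comp_of_abs_sub_le hmeas hr0 hlip (Lp.memLp t).abs
  have hu₁ := (Lp.memLp u₁).abs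
  have hu₂ := (Lp.memLp u₂).abs
  calc _ = ∫ x, (r (x, |t₁ x|) - r (x, |t₂ x|)) * (|u₂ x| - |u₁ x|) ∂μ :=
        integral_four_term_eq (hF t₁) (hF t₂) hu₁ hu₂
    _ ≤ ∫ x, L * (|(t₁ - t₂ : Lp ℝ 2 μ) x| * |(u₁ - u₂ : Lp ℝ 2 μ) x|) ∂μ := by
        refine integral_mono_ae (((hF t₁).sub (hF t₂)).integrable_mul (hu₂.sub hu₁))
          (((Lp.memLp _).abs.integrable_mul (Lp.memLp _).abs).const_mul L) ?_
        filter_upwards [Lp.coeFn_sub t₁ t₂, Lp.coeFn_sub u₁ u₂] with x ht hu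
        rw [ht, hu]
        exact sub_mul_abs_sub_abs_le hL (hlip x) _ _ _ _
    _ = L * ∫ x, |(t₁ - t₂ : Lp ℝ 2 μ) x| * |(u₁ - u₂ : Lp ℝ 2 μ) x| ∂μ :=
        integral_const_mul _ _
    _ ≤ L * (‖t₁ - t₂‖ * ‖u₁ - u₂‖) :=
        mul_le_mul_of_nonneg_left (L2.integral_abs_mul_abs_le _ _) hL
    _ = L * ‖t₁ - t₂‖ * ‖u₁ - u₂‖ := (mul_assoc _ _ _).symm

end MeasureTheory

theorem friction_functional_trace_four_term_estimate_general
    {V : Type*} [NormedAddCommGroup V] [InnerProductSpace ℝ V]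
    {X : Type*} [MeasurableSpace X] (μ : Measure X)
    (γ : V →L[ℝ] Lp ℝ 2 μ) (c_V : ℝ)
    (hγ : ∀ v : V, ‖γ v‖ ≤ c_V * ‖v‖)
    (r : X × ℝ → ℝ) (L_r : ℝ)
    (hrmeas : ∀ s : ℝ, Measurable fun x => r (x, s))
    (hr02 : MemLp (fun x => r (x, 0)) 2 μ)
    (hLr : 0 < L_r)
    (hrlip : ∀ x s₁ s₂, |r (x, s₁) - r (x, s₂)| ≤ L_r * |s₁ - s₂|) :
    ∀ η₁ η₂ v₁ v₂ : V,
      (∫ x, r (x, |γ η₁ x|) * |γ v₂ x| ∂μ) - (∫ x, r (x, |γ η₁ x|) * |γ v₁ x| ∂μ)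
        + (∫ x, r (x, |γ η₂ x|) * |γ v₁ x| ∂μ) - (∫ x, r (x, |γ η₂ x|) * |γ v₂ x| ∂μ)
      ≤ c_V ^ 2 * L_r * ‖η₁ - η₂‖ * ‖v₁ - v₂‖ := by
  intro η₁ η₂ v₁ v₂
  have hγη := hγ (η₁ - η₂)
  have hγv := hγ (v₁ - v₂)
  rw [map_sub] at hγη hγv
  calc _ ≤ L_r * ‖γ η₁ - γ η₂‖ * ‖γ v₁ - γ v₂‖ :=
        Lp.four_term_le_of_abs_sub_le hrmeas hr02 hLr.le hrlip _ _ _ _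
    _ ≤ L_r * (c_V * ‖η₁ - η₂‖) * (c_V * ‖v₁ - v₂‖) :=
        mul_le_mul (mul_le_mul_of_nonneg_left hγη hLr.le) hγv (norm_nonneg _)
          (mul_nonneg hLr.le ((norm_nonneg _).trans hγη))
    _ = c_V ^ 2 * L_r * ‖η₁ - η₂‖ * ‖v₁ - v₂‖ := by ring

/-- Four-term estimate for the friction functional composed with a trace operator:
if `γ : V → L²(μ)` is linear and bounded with `‖γ v‖ ≤ c_V ‖v‖`, and the friction
bound `r` is nonnegative, measurable in the first variable, Lipschitz with constant
`L_r` in the second variable, with `r(·,0) ∈ L²(μ)`, then the functional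
`j(η,v) = ∫ r(x,|γη(x)|) |γv(x)| dμ` satisfies the four-term estimate with
constant `c_V² L_r`. -/
theorem friction_functional_trace_four_term_estimate
    {V : Type*} [NormedAddCommGroup V] [InnerProductSpace ℝ V] [CompleteSpace V]
    {X : Type*} [MeasurableSpace X] (μ : Measure X)
    (γ : V →L[ℝ] Lp ℝ 2 μ) (c_V : ℝ) (hcV : 0 < c_V)
    (hγ : ∀ v : V, ‖γ v‖ ≤ c_V * ‖v‖)
    (r : X × ℝ → ℝ) (L_r : ℝ)
    (hr0 : ∀ x s, 0 ≤ r (x, s))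
    (hrmeas : ∀ s : ℝ, Measurable fun x => r (x, s))
    (hr02 : MemLp (fun x => r (x, 0)) 2 μ)
    (hLr : 0 < L_r)
    (hrlip : ∀ x s₁ s₂, |r (x, s₁) - r (x, s₂)| ≤ L_r * |s₁ - s₂|) :
    ∀ η₁ η₂ v₁ v₂ : V,
      (∫ x, r (x, |γ η₁ x|) * |γ v₂ x| ∂μ) - (∫ x, r (x, |γ η₁ x|) * |γ v₁ x| ∂μ)
        + (∫ x, r (x, |γ η₂ x|) * |γ v₁ x| ∂μ) - (∫ x, r (x, |γ η₂ x|) * |γ v₂ x| ∂μ)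
      ≤ c_V ^ 2 * L_r * ‖η₁ - η₂‖ * ‖v₁ - v₂‖ :=
  friction_functional_trace_four_term_estimate_general μ γ c_V hγ r L_r hrmeas hr02 hLr hrlip
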